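/- With H = ℤ^(ℕ) / ⟨x_i : i ∈ I⟩ as above and I ⊆ ℕ recursively enumerable but not recursive, the set {n : the image of x_n in H is zero} is not computable, even though H is recursively presented. -/

import Mathlib

/-- The subgroup of relations: the free abelian group basis vectors indexed by `I`. -/
noncomputable def relSubgroup (I : Set ℕ) : AddSubgroup (ℕ →₀ ℤ) :=
  AddSubgroup.closure ((fun i => Finsupp.single i (1 : ℤ)) '' I)

/-- The abelian group presented with generators `x_i`, `i ∈ ℕ`, and relations `x_i = 0`, `i ∈ I`. -/
abbrev PresentedAb (I : Set ℕ) : Type :=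
  (ℕ →₀ ℤ) ⧸ relSubgroup I

theorem relSubgroup_eq_supported (I : Set ℕ) :
    relSubgroup I = (Finsupp.supported ℤ ℤ I).toAddSubgroup := by
  rw [Finsupp.supported_eq_span_single, relSubgroup, ← Submodule.span_int_eq_addSubgroupClosure]

theorem single_mem_relSubgroup_iff {I : Set ℕ} {n : ℕ} {a : ℤ} (ha : a ≠ 0) :
    Finsupp.single n a ∈ relSubgroup I ↔ n ∈ I := by
  simp [relSubgroup_eq_supported, Finsupp.mem_supported, Finsupp.support_single n ha]

theorem mk_single_one_eq_zero_iff (I : Set ℕ) (n : ℕ) :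
    QuotientAddGroup.mk' (relSubgroup I) (Finsupp.single n (1 : ℤ)) = 0 ↔ n ∈ I := by
  rw [QuotientAddGroup.mk'_apply, QuotientAddGroup.eq_zero_iff,
    single_mem_relSubgroup_iff one_ne_zero]

theorem stmt_8_general (I : Set ℕ) (hnotrec : ¬ ComputablePred (· ∈ I)) :
    ¬ ComputablePred
      (fun n => QuotientAddGroup.mk' (relSubgroup I) (Finsupp.single n (1 : ℤ)) = 0) := by
  simpa only [mk_single_one_eq_zero_iff] using hnotrec

theorem stmt_8 (I : Set ℕ) (hre : REPred (· ∈ I)) (hnotrec : ¬ ComputablePred (· ∈ I)) :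
    ¬ ComputablePred
      (fun n => QuotientAddGroup.mk' (relSubgroup I) (Finsupp.single n (1 : ℤ)) = 0) :=
  stmt_8_general I hnotrec
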